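/- Let A_n = C_n(f) be Hermitian positive definite with f a nonnegative trigonometric polynomial not identically zero, so that the main diagonal of A_n is D_n = a₀ I_n with a₀ = (1/2π)∫_0^{2π} f > 0. Let P ∈ ℂ^{n×k} be a full column rank matrix and let W = I_n − P(P^H P)^{-1} P^H. Then for γ > 0 the following are equivalent: (a) min_{y ∈ ℂ^k} ‖x − P y‖²_{D_n} ≤ γ ‖x‖²_{A_n} for all x ∈ ℂ^n; (b) W ≤ (γ/a₀) C_n(f) in the partial ordering of Hermitian matrices. Moreover W is a Hermitian orthogonal projector, i.e., W^H = W and W² = W. -/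

import Mathlib

open Matrix Complex
open scoped Matrix ComplexConjugate ComplexOrder

noncomputable section

/-- The Fourier matrix of size `n`: `F_n = (1/√n)[e^{-2πijk/n}]_{j,k=0}^{n-1}`. -/
def fourierMatrix (n : ℕ) : Matrix (Fin n) (Fin n) ℂ :=
  Matrix.of fun j k : Fin n =>
    (((Real.sqrt n : ℝ) : ℂ))⁻¹ *
      Complex.exp (-(2 * (Real.pi : ℂ) * Complex.I * ((j : ℕ) : ℂ) * ((k : ℕ) : ℂ)) / (n : ℂ))

/-- A real-valued function is a trigonometric polynomial: a finite sum `∑_{|j|≤c} a_j e^{ijx}`. -/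
def IsTrigPolyR (f : ℝ → ℝ) : Prop :=
  ∃ (c : ℕ) (a : ℤ → ℂ), ∀ x : ℝ,
    (f x : ℂ) = ∑ j ∈ Finset.Icc (-(c : ℤ)) (c : ℤ), a j * Complex.exp (Complex.I * (j : ℂ) * (x : ℂ))

/-- The circulant matrix generated by a real-valued `f`:
`C_n(f) = F_n · diag_{j}(f(2πj/n)) · F_nᴴ`. -/
def circulantGenR (n : ℕ) (f : ℝ → ℝ) : Matrix (Fin n) (Fin n) ℂ :=
  fourierMatrix n *
    Matrix.diagonal (fun j : Fin n => ((f (2 * Real.pi * (j : ℕ) / n) : ℝ) : ℂ)) *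
    (fourierMatrix n)ᴴ

/-- The zeroth Fourier coefficient `a₀ = (1/2π)∫_0^{2π} f`. -/
def zerothCoeff (f : ℝ → ℝ) : ℝ := (1 / (2 * Real.pi)) * ∫ x in (0 : ℝ)..(2 * Real.pi), f x

/-- The squared weighted Euclidean (semi-)norm `‖x‖_X² = x^H X x` (its real part). -/
def wnormSq {n : ℕ} (X : Matrix (Fin n) (Fin n) ℂ) (x : Fin n → ℂ) : ℝ :=
  (dotProduct (star x) (X.mulVec x)).re


open Matrix Complex
open scoped Matrix ComplexConjugate ComplexOrder

/-!
The vector `x - P y₀` with `y₀ = (PᴴP)⁻¹Pᴴx` is `W x`, and since `W` is the orthogonal projector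
onto `(range P)^⊥`, `W(x - P y) = W x` for every `y`; hence
`min_y ‖x - P y‖² = ‖W x‖² = xᴴ W x`. With `D_n = a₀ I_n`, condition (a) therefore reads
`a₀ xᴴ W x ≤ γ xᴴ A_n x` for all `x`, which is (b). Dividing by `a₀` needs `a₀ > 0`: the mean of a
continuous, nonnegative, `2π`-periodic function that is not identically zero.
-/

theorem IsTrigPolyR.continuous {f : ℝ → ℝ} (hf : IsTrigPolyR f) : Continuous f := by
  obtain ⟨c, a, ha⟩ := hf
  have hre : f = fun x : ℝ => (∑ j ∈ Finset.Icc (-(c : ℤ)) c,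
      a j * exp (I * (j : ℂ) * (x : ℂ))).re := by
    funext x
    rw [← ha x, ofReal_re]
  rw [hre]
  fun_prop

theorem IsTrigPolyR.periodic {f : ℝ → ℝ} (hf : IsTrigPolyR f) :
    Function.Periodic f (2 * Real.pi) := by
  obtain ⟨c, a, ha⟩ := hf
  intro x
  apply ofReal_injective
  rw [ha, ha]
  refine Finset.sum_congr rfl fun j _ => ?_
  have harg : I * (j : ℂ) * ((x + 2 * Real.pi : ℝ) : ℂ)
      = I * (j : ℂ) * (x : ℂ) + (j : ℂ) * (2 * Real.pi * I) := by
    push_cast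
    ring
  rw [harg, exp_add, exp_int_mul_two_pi_mul_I, mul_one]

theorem Function.Periodic.intervalIntegral_pos {f : ℝ → ℝ} {T : ℝ} (hper : Function.Periodic f T)
    (hT : 0 < T) (hcont : Continuous f) (hf0 : ∀ x, 0 ≤ f x) (hfne : ∃ x, f x ≠ 0) :
    0 < ∫ x in (0 : ℝ)..T, f x := by
  obtain ⟨x, hx⟩ := hfne
  obtain ⟨y, hy, hfy⟩ := hper.exists_mem_Ico₀ hT x
  refine intervalIntegral.integral_pos hT hcont.continuousOn (fun z _ => hf0 z)
    ⟨y, Set.Ico_subset_Icc_self hy, ?_⟩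
  rw [← hfy]
  exact (hf0 x).lt_of_ne' hx

theorem zerothCoeff_pos {f : ℝ → ℝ} (hf : IsTrigPolyR f) (hf0 : ∀ x, 0 ≤ f x)
    (hfne : ∃ x, f x ≠ 0) : 0 < zerothCoeff f :=
  mul_pos (by positivity)
    (hf.periodic.intervalIntegral_pos Real.two_pi_pos hf.continuous hf0 hfne)

namespace Matrix

variable {m p : Type*} [Fintype m] [Fintype p] [DecidableEq p]

section CommRing

variable {R : Type*} [CommRing R] [StarRing R]

theorem IsHermitian.star_dotProduct_mulVec_eq_of_isIdempotentElem {W : Matrix m m R}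
    (hW : W.IsHermitian) (hWW : IsIdempotentElem W) (x : m → R) :
    star x ⬝ᵥ W *ᵥ x = star (W *ᵥ x) ⬝ᵥ W *ᵥ x := by
  rw [star_mulVec, ← dotProduct_mulVec, mulVec_mulVec, hW.eq, hWW.eq]

theorem mul_inv_conjTranspose_mul_self_mul {P : Matrix m p R} (hP : IsUnit (Pᴴ * P).det) :
    P * (Pᴴ * P)⁻¹ * Pᴴ * P = P := by
  simp only [Matrix.mul_assoc]
  rw [nonsing_inv_mul _ hP, Matrix.mul_one]

variable [DecidableEq m]

def complRangeProj (P : Matrix m p R) : Matrix m m R := 1 - P * (Pᴴ * P)⁻¹ * Pᴴ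

theorem isHermitian_complRangeProj (P : Matrix m p R) : (complRangeProj P).IsHermitian := by
  have hG : ((Pᴴ * P)⁻¹)ᴴ = (Pᴴ * P)⁻¹ := by
    rw [conjTranspose_nonsing_inv, conjTranspose_mul, conjTranspose_conjTranspose]
  simp only [IsHermitian, complRangeProj, conjTranspose_sub, conjTranspose_one, conjTranspose_mul,
    conjTranspose_conjTranspose, hG, Matrix.mul_assoc]

theorem complRangeProj_mul {P : Matrix m p R} (hP : IsUnit (Pᴴ * P).det) :
    complRangeProj P * P = 0 := by
  rw [complRangeProj, Matrix.sub_mul, Matrix.one_mul, mul_inv_conjTranspose_mul_self_mul hP,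
    sub_self]

theorem isIdempotentElem_complRangeProj {P : Matrix m p R} (hP : IsUnit (Pᴴ * P).det) :
    IsIdempotentElem (complRangeProj P) := by
  refine IsIdempotentElem.one_sub ?_
  rw [IsIdempotentElem, ← Matrix.mul_assoc, ← Matrix.mul_assoc,
    mul_inv_conjTranspose_mul_self_mul hP]

theorem sub_mulVec_eq_complRangeProj_mulVec (P : Matrix m p R) (x : m → R) :
    x - P *ᵥ (((Pᴴ * P)⁻¹ * Pᴴ) *ᵥ x) = complRangeProj P *ᵥ x := by
  rw [mulVec_mulVec, ← Matrix.mul_assoc, complRangeProj, sub_mulVec, one_mulVec]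

end CommRing

section RCLike

variable {𝕜 : Type*} [RCLike 𝕜]

theorem IsHermitian.posSemidef_iff_re_dotProduct_nonneg {A : Matrix m m 𝕜} (hA : A.IsHermitian) :
    A.PosSemidef ↔ ∀ x, 0 ≤ RCLike.re (star x ⬝ᵥ A *ᵥ x) := by
  refine ⟨fun h => h.re_dotProduct_nonneg, fun h => .of_dotProduct_mulVec_nonneg hA fun x => ?_⟩
  exact RCLike.nonneg_iff.mpr ⟨h x, hA.im_star_dotProduct_mulVec_self x⟩

theorem IsHermitian.star_dotProduct_mulVec_le_of_isIdempotentElem {W : Matrix m m 𝕜}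
    (hW : W.IsHermitian) (hWW : IsIdempotentElem W) (x : m → 𝕜) :
    star x ⬝ᵥ W *ᵥ x ≤ star x ⬝ᵥ x := by
  classical
  have hW' : (1 - W).IsHermitian := isHermitian_one.sub hW
  rw [← sub_nonneg]
  calc 0 ≤ star ((1 - W) *ᵥ x) ⬝ᵥ (1 - W) *ᵥ x := dotProduct_star_self_nonneg _
    _ = star x ⬝ᵥ x - star x ⬝ᵥ W *ᵥ x := by
      rw [← hW'.star_dotProduct_mulVec_eq_of_isIdempotentElem hWW.one_sub, sub_mulVec,
        one_mulVec, dotProduct_sub]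

variable [DecidableEq m]

theorem star_dotProduct_complRangeProj_mulVec_le {P : Matrix m p 𝕜} (hP : IsUnit (Pᴴ * P).det)
    (x : m → 𝕜) (y : p → 𝕜) :
    star x ⬝ᵥ complRangeProj P *ᵥ x ≤ star (x - P *ᵥ y) ⬝ᵥ (x - P *ᵥ y) := by
  have hW := isHermitian_complRangeProj P
  have hWW := isIdempotentElem_complRangeProj hP
  have hWx : complRangeProj P *ᵥ (x - P *ᵥ y) = complRangeProj P *ᵥ x := by
    rw [mulVec_sub, mulVec_mulVec, complRangeProj_mul hP, zero_mulVec, sub_zero]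
  calc star x ⬝ᵥ complRangeProj P *ᵥ x
      = star (x - P *ᵥ y) ⬝ᵥ complRangeProj P *ᵥ (x - P *ᵥ y) := by
        rw [hW.star_dotProduct_mulVec_eq_of_isIdempotentElem hWW,
          hW.star_dotProduct_mulVec_eq_of_isIdempotentElem hWW, hWx]
    _ ≤ star (x - P *ᵥ y) ⬝ᵥ (x - P *ᵥ y) :=
        hW.star_dotProduct_mulVec_le_of_isIdempotentElem hWW _

theorem exists_re_dotProduct_sub_mulVec_le_iff {P : Matrix m p 𝕜} (hP : IsUnit (Pᴴ * P).det)
    (x : m → 𝕜) (b : ℝ) :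
    (∃ y, RCLike.re (star (x - P *ᵥ y) ⬝ᵥ (x - P *ᵥ y)) ≤ b) ↔
      RCLike.re (star x ⬝ᵥ complRangeProj P *ᵥ x) ≤ b := by
  refine ⟨fun ⟨y, hy⟩ =>
    (RCLike.re_le_re (star_dotProduct_complRangeProj_mulVec_le hP x y)).trans hy,
    fun h => ⟨((Pᴴ * P)⁻¹ * Pᴴ) *ᵥ x, ?_⟩⟩
  rwa [sub_mulVec_eq_complRangeProj_mulVec,
    ← (isHermitian_complRangeProj P).star_dotProduct_mulVec_eq_of_isIdempotentElem
      (isIdempotentElem_complRangeProj hP)]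

end RCLike

end Matrix

theorem wnormSq_ofReal_smul_one {n : ℕ} (a : ℝ) (z : Fin n → ℂ) :
    wnormSq ((a : ℂ) • (1 : Matrix (Fin n) (Fin n) ℂ)) z = a * (star z ⬝ᵥ z).re := by
  rw [wnormSq, smul_mulVec, one_mulVec, dotProduct_smul, smul_eq_mul, re_ofReal_mul]

theorem forall_exists_wnormSq_le_iff_posSemidef {n : ℕ} {p : Type*} [Fintype p] [DecidableEq p]
    {A : Matrix (Fin n) (Fin n) ℂ} (hA : A.IsHermitian) {P : Matrix (Fin n) p ℂ}
    (hP : IsUnit (Pᴴ * P).det) {a : ℝ} (ha : 0 < a) (γ : ℝ) :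
    (∀ x, ∃ y, wnormSq ((a : ℂ) • (1 : Matrix (Fin n) (Fin n) ℂ)) (x - P *ᵥ y) ≤ γ * wnormSq A x)
      ↔ (((γ / a : ℝ) : ℂ) • A - complRangeProj P).PosSemidef := by
  have hM : (((γ / a : ℝ) : ℂ) • A - complRangeProj P).IsHermitian :=
    (hA.smul (Complex.conj_ofReal _)).sub (isHermitian_complRangeProj P)
  rw [hM.posSemidef_iff_re_dotProduct_nonneg]
  refine forall_congr' fun x => ?_
  calc (∃ y, wnormSq ((a : ℂ) • 1) (x - P *ᵥ y) ≤ γ * wnormSq A x)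
      ↔ ∃ y, RCLike.re (star (x - P *ᵥ y) ⬝ᵥ (x - P *ᵥ y)) ≤ γ / a * wnormSq A x := by
        simp only [wnormSq_ofReal_smul_one, RCLike.re_to_complex, div_mul_eq_mul_div,
          le_div_iff₀' ha]
    _ ↔ RCLike.re (star x ⬝ᵥ complRangeProj P *ᵥ x) ≤ γ / a * wnormSq A x :=
        exists_re_dotProduct_sub_mulVec_le_iff hP x _
    _ ↔ 0 ≤ RCLike.re (star x ⬝ᵥ (((γ / a : ℝ) : ℂ) • A - complRangeProj P) *ᵥ x) := by
        rw [wnormSq, sub_mulVec, dotProduct_sub, smul_mulVec, dotProduct_smul, smul_eq_mul, map_sub,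
          RCLike.re_to_complex, RCLike.re_to_complex, re_ofReal_mul, sub_nonneg]

theorem approximation_property_reformulation_general (n k : ℕ)
    (f : ℝ → ℝ) (hf : IsTrigPolyR f) (hf0 : ∀ x, 0 ≤ f x) (hfne : ∃ x, f x ≠ 0)
    (hA : (circulantGenR n f).PosDef)
    (P : Matrix (Fin n) (Fin k) ℂ) (hP : Function.Injective P.mulVec)
    (γ : ℝ) :
    ((∀ x : Fin n → ℂ, ∃ y : Fin k → ℂ,
        wnormSq ((zerothCoeff f : ℂ) • (1 : Matrix (Fin n) (Fin n) ℂ)) (x - P.mulVec y) ≤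
          γ * wnormSq (circulantGenR n f) x)
      ↔ (((γ / zerothCoeff f : ℝ) : ℂ) • circulantGenR n f -
          ((1 : Matrix (Fin n) (Fin n) ℂ) - P * (Pᴴ * P)⁻¹ * Pᴴ)).PosSemidef)
    ∧ ((1 : Matrix (Fin n) (Fin n) ℂ) - P * (Pᴴ * P)⁻¹ * Pᴴ)ᴴ =
        (1 : Matrix (Fin n) (Fin n) ℂ) - P * (Pᴴ * P)⁻¹ * Pᴴ
    ∧ ((1 : Matrix (Fin n) (Fin n) ℂ) - P * (Pᴴ * P)⁻¹ * Pᴴ) *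
        ((1 : Matrix (Fin n) (Fin n) ℂ) - P * (Pᴴ * P)⁻¹ * Pᴴ) =
        (1 : Matrix (Fin n) (Fin n) ℂ) - P * (Pᴴ * P)⁻¹ * Pᴴ := by
  have hPP : IsUnit (Pᴴ * P).det :=
    (isUnit_iff_isUnit_det _).mp (PosDef.conjTranspose_mul_self P hP).isUnit
  exact ⟨forall_exists_wnormSq_le_iff_posSemidef hA.isHermitian hPP
      (zerothCoeff_pos hf hf0 hfne) γ,
    (isHermitian_complRangeProj P).eq, (isIdempotentElem_complRangeProj hPP).eq⟩

theorem approximation_property_reformulation (n k : ℕ) (hkn : k < n)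
    (f : ℝ → ℝ) (hf : IsTrigPolyR f) (hf0 : ∀ x, 0 ≤ f x) (hfne : ∃ x, f x ≠ 0)
    (hA : (circulantGenR n f).PosDef)
    (P : Matrix (Fin n) (Fin k) ℂ) (hP : Function.Injective P.mulVec)
    (γ : ℝ) (hγ : 0 < γ) :
    ((∀ x : Fin n → ℂ, ∃ y : Fin k → ℂ,
        wnormSq ((zerothCoeff f : ℂ) • (1 : Matrix (Fin n) (Fin n) ℂ)) (x - P.mulVec y) ≤
          γ * wnormSq (circulantGenR n f) x)
      ↔ (((γ / zerothCoeff f : ℝ) : ℂ) • circulantGenR n f -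
          ((1 : Matrix (Fin n) (Fin n) ℂ) - P * (Pᴴ * P)⁻¹ * Pᴴ)).PosSemidef)
    ∧ ((1 : Matrix (Fin n) (Fin n) ℂ) - P * (Pᴴ * P)⁻¹ * Pᴴ)ᴴ =
        (1 : Matrix (Fin n) (Fin n) ℂ) - P * (Pᴴ * P)⁻¹ * Pᴴ
    ∧ ((1 : Matrix (Fin n) (Fin n) ℂ) - P * (Pᴴ * P)⁻¹ * Pᴴ) *
        ((1 : Matrix (Fin n) (Fin n) ℂ) - P * (Pᴴ * P)⁻¹ * Pᴴ) =
        (1 : Matrix (Fin n) (Fin n) ℂ) - P * (Pᴴ * P)⁻¹ * Pᴴ :=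
  approximation_property_reformulation_general n k f hf hf0 hfne hA P hP γ
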